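/- arXiv:1909.01918 — 2 statements merged into one kernel-verified Lean document; each statement's English description precedes it below -/
import Mathlib

section
/- If G₁ and G₂ are graphs with at least one vertex each, then any orthogonal d-coloring of the join G₁ ∧ G₂ satisfies d ≥ π(G₁) + π(G₂); hence π(G₁ ∧ G₂) = π(G₁) + π(G₂). -/
open scoped RealInnerProductSpace

/-- An orthogonal vector `d`-coloring of a graph: nonzero vectors of `ℝ^d` assigned to
vertices such that adjacent vertices receive orthogonal vectors. -/
def IsOrthColoring {V : Type*} (G : SimpleGraph V) (d : ℕ)
    (f : V → EuclideanSpace ℝ (Fin d)) : Prop :=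
  (∀ v, f v ≠ 0) ∧ ∀ ⦃u v⦄, G.Adj u v → ⟪f u, f v⟫ = 0

/-- The orthogonal number `π(G)`: least `d` admitting an orthogonal `d`-coloring. -/
noncomputable def orthNumber {V : Type*} (G : SimpleGraph V) : ℕ :=
  sInf {d | ∃ f, IsOrthColoring G d f}

/-- An orthogonal `d`-edge-coloring: nonzero vectors of `ℝ^d` on edges, with edges
sharing an endpoint receiving orthogonal vectors. -/
def IsOrthEdgeColoring {V : Type*} (G : SimpleGraph V) (d : ℕ)
    (f : G.edgeSet → EuclideanSpace ℝ (Fin d)) : Prop :=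
  (∀ e, f e ≠ 0) ∧ ∀ ⦃e e'⦄, (G.lineGraph).Adj e e' → ⟪f e, f e'⟫ = 0

/-- The orthogonal index `π'(G)`: least `d` admitting an orthogonal `d`-edge-coloring. -/
noncomputable def orthIndex {V : Type*} (G : SimpleGraph V) : ℕ :=
  sInf {d | ∃ f, IsOrthEdgeColoring G d f}

/-- The chromatic index of `G` is the chromatic number of its line graph. -/
noncomputable def chromIndex {V : Type*} (G : SimpleGraph V) : ℕ∞ :=
  (G.lineGraph).chromaticNumber

/-- The join of two graphs: disjoint union plus all edges across. -/
def joinGraph {V₁ V₂ : Type*} (G₁ : SimpleGraph V₁) (G₂ : SimpleGraph V₂) :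
    SimpleGraph (V₁ ⊕ V₂) where
  Adj u v := match u, v with
    | .inl a, .inl b => G₁.Adj a b
    | .inr a, .inr b => G₂.Adj a b
    | _, _ => True
  symm := by constructor; rintro (a|a) (b|b) h <;> simp_all [SimpleGraph.adj_comm]
  loopless := by constructor; rintro (a|a) h <;> simp_all

/-- The orthogonality graph of a set of vectors: vertices are the vectors in `S`,
two distinct vectors adjacent iff orthogonal. -/
def orthGraph (d : ℕ) (S : Set (EuclideanSpace ℝ (Fin d))) : SimpleGraph S where
  Adj u v := u ≠ v ∧ ⟪(u : EuclideanSpace ℝ (Fin d)), (v : EuclideanSpace ℝ (Fin d))⟫ = 0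
  symm := by
    constructor
    rintro u v ⟨h1, h2⟩
    exact ⟨h1.symm, by rwa [real_inner_comm]⟩
  loopless := by constructor; rintro u ⟨h, -⟩; exact h rfl

/-! Restricting an orthogonal coloring of `G₁ ∧ G₂` to each side and moving into the span of
its vectors gives colorings of `G₁` and `G₂` in mutually orthogonal subspaces of `ℝ^d`, so
`π(G₁) + π(G₂) ≤ d`. Conversely, optimal colorings of `G₁` and `G₂` placed in the two factors of
`ℝ^π(G₁) × ℝ^π(G₂)` color the join. -/

namespace joinGraph

variable {V₁ V₂ : Type*} (G₁ : SimpleGraph V₁) (G₂ : SimpleGraph V₂)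

def inl : G₁ →g joinGraph G₁ G₂ := ⟨Sum.inl, id⟩

def inr : G₂ →g joinGraph G₁ G₂ := ⟨Sum.inr, id⟩

end joinGraph

section

variable {V W : Type*} {G : SimpleGraph V} {d : ℕ} {f : V → EuclideanSpace ℝ (Fin d)}

namespace IsOrthColoring

theorem orthNumber_le (hf : IsOrthColoring G d f) : orthNumber G ≤ d :=
  Nat.sInf_le ⟨f, hf⟩

theorem exists_orthNumber (hf : IsOrthColoring G d f) :
    ∃ g, IsOrthColoring G (orthNumber G) g :=
  Nat.sInf_mem (s := {d | ∃ f, IsOrthColoring G d f}) ⟨d, f, hf⟩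

theorem comp {H : SimpleGraph W} (hf : IsOrthColoring G d f) (φ : H →g G) :
    IsOrthColoring H d (f ∘ φ) :=
  ⟨fun _ => hf.1 _, fun _ _ h => hf.2 (φ.map_adj h)⟩

end IsOrthColoring

theorem orthNumber_le_finrank {E : Type*} [NormedAddCommGroup E] [InnerProductSpace ℝ E]
    [FiniteDimensional ℝ E] {g : V → E} (hg₀ : ∀ v, g v ≠ 0)
    (hg : ∀ ⦃u v⦄, G.Adj u v → ⟪g u, g v⟫ = 0) :
    orthNumber G ≤ Module.finrank ℝ E :=
  IsOrthColoring.orthNumber_le (f := (stdOrthonormalBasis ℝ E).repr ∘ g)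
    ⟨fun v => by simpa using hg₀ v, fun u v h => by simpa using hg h⟩

theorem IsOrthColoring.orthNumber_le_finrank_span (hf : IsOrthColoring G d f) :
    orthNumber G ≤ Module.finrank ℝ (Submodule.span ℝ (Set.range f)) :=
  orthNumber_le_finrank (g := fun v => ⟨f v, Submodule.subset_span ⟨v, rfl⟩⟩)
    (fun v h => hf.1 v congr($h.1)) fun _ _ h => hf.2 h

theorem Submodule.finrank_add_finrank_le_of_isOrtho {E : Type*} [NormedAddCommGroup E]
    [InnerProductSpace ℝ E] [FiniteDimensional ℝ E] {U U' : Submodule ℝ E} (h : U ⟂ U') :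
    Module.finrank ℝ U + Module.finrank ℝ U' ≤ Module.finrank ℝ E :=
  U.finrank_add_finrank_orthogonal ▸ add_le_add le_rfl (Submodule.finrank_mono h.symm.le)

end

section

variable {V₁ V₂ : Type*} {G₁ : SimpleGraph V₁} {G₂ : SimpleGraph V₂}

theorem IsOrthColoring.orthNumber_add_le_of_joinGraph {d : ℕ}
    {f : V₁ ⊕ V₂ → EuclideanSpace ℝ (Fin d)}
    (hf : IsOrthColoring (joinGraph G₁ G₂) d f) :
    orthNumber G₁ + orthNumber G₂ ≤ d := by
  have hortho : Submodule.span ℝ (Set.range (f ∘ Sum.inl)) ⟂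
      Submodule.span ℝ (Set.range (f ∘ Sum.inr)) := by
    rw [Submodule.isOrtho_span]
    rintro _ ⟨a, rfl⟩ _ ⟨b, rfl⟩
    exact hf.2 (show (joinGraph G₁ G₂).Adj (.inl a) (.inr b) from trivial)
  calc orthNumber G₁ + orthNumber G₂
      ≤ Module.finrank ℝ (Submodule.span ℝ (Set.range (f ∘ Sum.inl))) +
          Module.finrank ℝ (Submodule.span ℝ (Set.range (f ∘ Sum.inr))) :=
        add_le_add (hf.comp (joinGraph.inl G₁ G₂)).orthNumber_le_finrank_span
          (hf.comp (joinGraph.inr G₁ G₂)).orthNumber_le_finrank_span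
    _ ≤ d := (Submodule.finrank_add_finrank_le_of_isOrtho hortho).trans_eq (by simp)

theorem orthNumber_joinGraph_le {c₁ c₂ : ℕ} {g₁ : V₁ → EuclideanSpace ℝ (Fin c₁)}
    {g₂ : V₂ → EuclideanSpace ℝ (Fin c₂)} (hg₁ : IsOrthColoring G₁ c₁ g₁)
    (hg₂ : IsOrthColoring G₂ c₂ g₂) :
    orthNumber (joinGraph G₁ G₂) ≤ c₁ + c₂ := by
  have hE : Module.finrank ℝ
      (WithLp 2 (EuclideanSpace ℝ (Fin c₁) × EuclideanSpace ℝ (Fin c₂))) = c₁ + c₂ := by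
    rw [(WithLp.linearEquiv 2 ℝ _).finrank_eq]
    simp
  let g := Sum.elim (fun a => WithLp.toLp 2 (g₁ a, (0 : EuclideanSpace ℝ (Fin c₂))))
    (fun b => WithLp.toLp 2 ((0 : EuclideanSpace ℝ (Fin c₁)), g₂ b))
  refine hE ▸ orthNumber_le_finrank (g := g) ?_ ?_
  · rintro (a | b) h
    · exact hg₁.1 a congr(WithLp.ofLp $h |>.1)
    · exact hg₂.1 b congr(WithLp.ofLp $h |>.2)
  · rintro (a | b) (a' | b') h
    · simpa [g] using hg₁.2 (show G₁.Adj a a' from h)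
    · simp [g]
    · simp [g]
    · simpa [g] using hg₂.2 (show G₂.Adj b b' from h)

end

theorem stmt2_general {V₁ V₂ : Type*}
    (G₁ : SimpleGraph V₁) (G₂ : SimpleGraph V₂) (d : ℕ)
    (f : V₁ ⊕ V₂ → EuclideanSpace ℝ (Fin d))
    (hf : IsOrthColoring (joinGraph G₁ G₂) d f) :
    orthNumber G₁ + orthNumber G₂ ≤ d ∧
      orthNumber (joinGraph G₁ G₂) = orthNumber G₁ + orthNumber G₂ := by
  obtain ⟨g₁, hg₁⟩ := (hf.comp (joinGraph.inl G₁ G₂)).exists_orthNumber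
  obtain ⟨g₂, hg₂⟩ := (hf.comp (joinGraph.inr G₁ G₂)).exists_orthNumber
  obtain ⟨F, hF⟩ := hf.exists_orthNumber
  exact ⟨hf.orthNumber_add_le_of_joinGraph,
    (orthNumber_joinGraph_le hg₁ hg₂).antisymm hF.orthNumber_add_le_of_joinGraph⟩

theorem stmt2 {V₁ V₂ : Type*} [Nonempty V₁] [Nonempty V₂]
    (G₁ : SimpleGraph V₁) (G₂ : SimpleGraph V₂) (d : ℕ)
    (f : V₁ ⊕ V₂ → EuclideanSpace ℝ (Fin d))
    (hf : IsOrthColoring (joinGraph G₁ G₂) d f) :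
    orthNumber G₁ + orthNumber G₂ ≤ d ∧
      orthNumber (joinGraph G₁ G₂) = orthNumber G₁ + orthNumber G₂ :=
  stmt2_general G₁ G₂ d f hf
end

section
/- If there exists a finite graph G with χ(G) − π(G) ≥ 1, then for every positive integer k there exists a graph H with χ(H) − π(H) ≥ 2^k; namely, iterating the join of a graph with itself doubles the gap between the chromatic number and the orthogonal number. -/
open scoped RealInnerProductSpace

/-!
Orthogonal colorings of `G₁` in `ℝ^{d₁}` and of `G₂` in `ℝ^{d₂}` combine into one of the join
in `ℝ^{d₁ + d₂} = ℝ^{d₁} ⊕ ℝ^{d₂}`, the two sides living in orthogonal summands; so `π` is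
subadditive under joins. A proper coloring of the join uses disjoint color sets on the two sides,
so `χ` is superadditive. Hence the gap `χ - π` at least doubles under `G ↦ G ∧ G`, and `k`
iterations starting from a gap of `1` give a gap of `2 ^ k`.
-/

namespace EuclideanSpace

def append {m n : ℕ} (x : EuclideanSpace ℝ (Fin m)) (y : EuclideanSpace ℝ (Fin n)) :
    EuclideanSpace ℝ (Fin (m + n)) :=
  WithLp.toLp 2 (Fin.append x.ofLp y.ofLp)

theorem inner_append_append {m n : ℕ} (x x' : EuclideanSpace ℝ (Fin m))
    (y y' : EuclideanSpace ℝ (Fin n)) :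
    ⟪append x y, append x' y'⟫ = ⟪x, x'⟫ + ⟪y, y'⟫ := by
  simp only [append, PiLp.inner_apply, Fin.sum_univ_add, Fin.append_left, Fin.append_right]

theorem append_zero_ne_zero {m n : ℕ} {x : EuclideanSpace ℝ (Fin m)} (hx : x ≠ 0) :
    append x (0 : EuclideanSpace ℝ (Fin n)) ≠ 0 := by
  rw [← inner_self_ne_zero (𝕜 := ℝ), inner_append_append, inner_zero_left, add_zero]
  exact inner_self_ne_zero.2 hx

theorem zero_append_ne_zero {m n : ℕ} {y : EuclideanSpace ℝ (Fin n)} (hy : y ≠ 0) :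
    append (0 : EuclideanSpace ℝ (Fin m)) y ≠ 0 := by
  rw [← inner_self_ne_zero (𝕜 := ℝ), inner_append_append, inner_zero_left, zero_add]
  exact inner_self_ne_zero.2 hy

end EuclideanSpace

open EuclideanSpace

section OrthColoring

variable {V V₁ V₂ : Type*}

theorem exists_isOrthColoring_natCard [Finite V] (G : SimpleGraph V) :
    ∃ f, IsOrthColoring G (Nat.card V) f := by
  have hbasis := (EuclideanSpace.basisFun (Fin (Nat.card V)) ℝ).orthonormal
  let e := Finite.equivFin V
  exact ⟨fun v => EuclideanSpace.basisFun _ ℝ (e v), fun v => hbasis.ne_zero _,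
    fun u v huv => hbasis.2 (e.injective.ne huv.ne)⟩

theorem orthNumber_le {G : SimpleGraph V} {d : ℕ} {f : V → EuclideanSpace ℝ (Fin d)}
    (hf : IsOrthColoring G d f) : orthNumber G ≤ d :=
  Nat.sInf_le ⟨f, hf⟩

theorem exists_isOrthColoring_orthNumber [Finite V] (G : SimpleGraph V) :
    ∃ f, IsOrthColoring G (orthNumber G) f :=
  Nat.sInf_mem (s := {d | ∃ f, IsOrthColoring G d f}) ⟨_, exists_isOrthColoring_natCard G⟩

theorem IsOrthColoring.joinGraph {G₁ : SimpleGraph V₁} {G₂ : SimpleGraph V₂} {d₁ d₂ : ℕ}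
    {f : V₁ → EuclideanSpace ℝ (Fin d₁)} {g : V₂ → EuclideanSpace ℝ (Fin d₂)}
    (hf : IsOrthColoring G₁ d₁ f) (hg : IsOrthColoring G₂ d₂ g) :
    IsOrthColoring (joinGraph G₁ G₂) (d₁ + d₂)
      (Sum.elim (fun v => append (f v) 0) (fun v => append 0 (g v))) := by
  refine ⟨?_, ?_⟩
  · rintro (v | v)
    exacts [append_zero_ne_zero (hf.1 v), zero_append_ne_zero (hg.1 v)]
  · rintro (u | u) (v | v) huv <;> simp only [Sum.elim_inl, Sum.elim_inr, inner_append_append,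
      inner_zero_left, inner_zero_right, add_zero, zero_add]
    exacts [hf.2 huv, hg.2 huv]

theorem orthNumber_joinGraph_le_s4 [Finite V₁] [Finite V₂] (G₁ : SimpleGraph V₁)
    (G₂ : SimpleGraph V₂) :
    orthNumber (joinGraph G₁ G₂) ≤ orthNumber G₁ + orthNumber G₂ := by
  obtain ⟨f, hf⟩ := exists_isOrthColoring_orthNumber G₁
  obtain ⟨g, hg⟩ := exists_isOrthColoring_orthNumber G₂
  exact orthNumber_le (hf.joinGraph hg)

end OrthColoring

section Chromatic

variable {V V₁ V₂ α : Type*}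

theorem SimpleGraph.Coloring.colorable_ncard_range [Finite α] {G : SimpleGraph V}
    (C : G.Coloring α) : G.Colorable (Set.range C).ncard := by
  have := Fintype.ofFinite (Set.range C)
  rw [← Nat.card_coe_set_eq, Nat.card_eq_fintype_card]
  exact (SimpleGraph.Coloring.mk (Set.rangeFactorization C)
    fun huv heq => C.valid huv (congrArg Subtype.val heq)).colorable

theorem chromaticNumber_add_le_chromaticNumber_joinGraph (G₁ : SimpleGraph V₁)
    (G₂ : SimpleGraph V₂) :
    G₁.chromaticNumber + G₂.chromaticNumber ≤ (joinGraph G₁ G₂).chromaticNumber := by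
  rw [SimpleGraph.chromaticNumber_eq_biInf (joinGraph G₁ G₂)]
  refine le_iInf₂ fun n (hn : (joinGraph G₁ G₂).Colorable n) => ?_
  obtain ⟨c⟩ := hn
  let c₁ : G₁.Coloring (Fin n) := SimpleGraph.Coloring.mk (c ∘ Sum.inl) fun huv => c.valid huv
  let c₂ : G₂.Coloring (Fin n) := SimpleGraph.Coloring.mk (c ∘ Sum.inr) fun huv => c.valid huv
  have hdisj : Disjoint (Set.range c₁) (Set.range c₂) :=
    Set.disjoint_range_iff.2 fun u v =>
      c.valid (show (joinGraph G₁ G₂).Adj (.inl u) (.inr v) from trivial)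
  calc G₁.chromaticNumber + G₂.chromaticNumber
      ≤ ((Set.range c₁).ncard : ℕ∞) + (Set.range c₂).ncard :=
        add_le_add c₁.colorable_ncard_range.chromaticNumber_le
          c₂.colorable_ncard_range.chromaticNumber_le
    _ = (Set.range c₁ ∪ Set.range c₂).ncard := by rw [Set.ncard_union_eq hdisj, Nat.cast_add]
    _ ≤ n := by exact_mod_cast (Set.ncard_le_card _).trans_eq (Nat.card_fin n)

end Chromatic

theorem orthNumber_add_le_chromaticNumber_joinGraph {V₁ V₂ : Type*} [Finite V₁] [Finite V₂]
    {G₁ : SimpleGraph V₁} {G₂ : SimpleGraph V₂} {a b : ℕ∞}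
    (h₁ : (orthNumber G₁ : ℕ∞) + a ≤ G₁.chromaticNumber)
    (h₂ : (orthNumber G₂ : ℕ∞) + b ≤ G₂.chromaticNumber) :
    (orthNumber (joinGraph G₁ G₂) : ℕ∞) + (a + b) ≤ (joinGraph G₁ G₂).chromaticNumber :=
  calc (orthNumber (joinGraph G₁ G₂) : ℕ∞) + (a + b)
      ≤ ((orthNumber G₁ + orthNumber G₂ : ℕ) : ℕ∞) + (a + b) := by
        gcongr; exact orthNumber_joinGraph_le_s4 G₁ G₂
    _ = ((orthNumber G₁ : ℕ∞) + a) + ((orthNumber G₂ : ℕ∞) + b) := by push_cast; ring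
    _ ≤ G₁.chromaticNumber + G₂.chromaticNumber := add_le_add h₁ h₂
    _ ≤ (joinGraph G₁ G₂).chromaticNumber :=
        chromaticNumber_add_le_chromaticNumber_joinGraph G₁ G₂

theorem stmt4
    (h : ∃ (V : Type) (_ : Fintype V) (G : SimpleGraph V),
      (orthNumber G : ℕ∞) + 1 ≤ G.chromaticNumber) :
    ∀ k : ℕ, 0 < k → ∃ (W : Type) (_ : Fintype W) (H : SimpleGraph W),
      (orthNumber H : ℕ∞) + 2 ^ k ≤ H.chromaticNumber := by
  suffices ∀ k : ℕ, ∃ (W : Type) (_ : Fintype W) (H : SimpleGraph W),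
      (orthNumber H : ℕ∞) + 2 ^ k ≤ H.chromaticNumber from fun k _ => this k
  intro k
  induction k with
  | zero => simpa using h
  | succ k ih =>
    obtain ⟨W, _, H, hH⟩ := ih
    refine ⟨W ⊕ W, inferInstance, joinGraph H H, ?_⟩
    rw [pow_succ, mul_two]
    exact orthNumber_add_le_chromaticNumber_joinGraph hH hH
end
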